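/- arXiv:2508.12152 — 2 statements merged into one kernel-verified Lean document; each statement's English description precedes it below -/
import Mathlib

section
/- Let L = ℚ(6^{1/4}, i) ⊆ ℂ. The center of the Galois group Gal(L/ℚ) is a cyclic group of order 2, and it has index 4 in Gal(L/ℚ). (In particular L satisfies Cohen's condition: L/ℚ is Galois and Gal(L/ℚ) has a cyclic center of index 4.) -/
set_option synthInstance.maxHeartbeats 1000000
set_option maxHeartbeats 1000000

open Polynomial IntermediateField

/-- `L = ℚ(6^{1/4}, i)`, the intermediate field of `ℂ/ℚ` generated by the
positive real fourth root of `6` and the imaginary unit `i`. -/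
noncomputable def L : IntermediateField ℚ ℂ :=
  IntermediateField.adjoin ℚ {(((6 : ℝ) ^ ((1 : ℝ) / 4) : ℝ) : ℂ), Complex.I}

noncomputable def a' : ℂ := (((6 : ℝ) ^ ((1 : ℝ) / 4) : ℝ) : ℂ)

theorem ha4 : a' ^ 4 = 6 := by
  have h : ((6:ℝ) ^ ((1:ℝ)/4)) ^ (4:ℕ) = 6 := by
    rw [← Real.rpow_natCast ((6:ℝ) ^ ((1:ℝ)/4)) 4, ← Real.rpow_mul (by norm_num)]
    norm_num
  unfold a'
  rw [← Complex.ofReal_pow, h]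
  norm_num

theorem ha_ne : a' ≠ 0 := by
  unfold a'
  simp only [ne_eq, Complex.ofReal_eq_zero]
  positivity

theorem irrZ : Irreducible ((X^4 - C 6 : ℤ[X])) := by
  have hm : (X^4 - C 6 : ℤ[X]).Monic := monic_X_pow_sub_C 6 (by norm_num)
  have hd : (X^4 - C 6 : ℤ[X]).natDegree = 4 := natDegree_X_pow_sub_C
  have hE : (X^4 - C 6 : ℤ[X]).IsEisensteinAt (Ideal.span {2}) := by
    refine ⟨?_, ?_, ?_⟩
    · rw [hm.leadingCoeff]
      simp [Ideal.mem_span_singleton]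
    · intro n hn
      rw [hd] at hn
      interval_cases n <;>
        · simp [coeff_X_pow, Ideal.mem_span_singleton]
          try norm_num
    · rw [Ideal.span_singleton_pow]
      simp [coeff_X_pow, Ideal.mem_span_singleton]
  exact hE.irreducible (Ideal.span_singleton_prime (by norm_num) |>.mpr Int.prime_two)
    hm.isPrimitive (by rw [hd]; norm_num)

theorem irrQ : Irreducible ((X^4 - C 6 : ℚ[X])) := by
  have := (monic_X_pow_sub_C (6:ℤ) (by norm_num)).irreducible_iff_irreducible_map_fraction_map
    (K := ℚ) |>.mp irrZ
  convert this using 1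
  simp [Polynomial.map_sub, Polynomial.map_pow, map_ofNat]

theorem hint_a : IsIntegral ℚ a' := by
  refine ⟨X^4 - C 6, monic_X_pow_sub_C 6 (by norm_num), ?_⟩
  simp [ha4]

theorem hminpoly_a : minpoly ℚ a' = X^4 - C 6 := by
  refine (minpoly.eq_of_irreducible_of_monic irrQ ?_ (monic_X_pow_sub_C 6 (by norm_num))).symm
  simp [ha4]

theorem hint_I : IsIntegral ℚ Complex.I := by
  refine ⟨X^2 + C 1, by apply monic_X_pow_add_C; norm_num, ?_⟩
  simp [Complex.I_sq]

noncomputable def RF : IntermediateField ℚ ℂ :=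
  Subfield.toIntermediateField Complex.ofRealHom.fieldRange
    (fun x => ⟨(x : ℝ), by simp⟩)

theorem hK1real : ∀ x ∈ IntermediateField.adjoin ℚ {a'}, ∃ r : ℝ, x = (r : ℂ) := by
  intro x hx
  have h : IntermediateField.adjoin ℚ {a'} ≤ RF := by
    rw [IntermediateField.adjoin_le_iff]
    rintro y rfl
    exact ⟨(6:ℝ) ^ ((1:ℝ)/4), rfl⟩
  obtain ⟨r, hr⟩ := h hx
  exact ⟨r, hr.symm⟩

noncomputable def K1 : IntermediateField ℚ ℂ := IntermediateField.adjoin ℚ {a'}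

theorem hminI : minpoly K1 Complex.I = X^2 - C (-1 : K1) := by
  refine (minpoly.eq_of_irreducible_of_monic ?_ ?_ (monic_X_pow_sub_C _ (by norm_num))).symm
  · apply X_pow_sub_C_irreducible_of_prime Nat.prime_two
    intro b hb
    obtain ⟨r, hr⟩ := hK1real b b.2
    have : (b:ℂ)^2 = -1 := by
      have := congrArg (algebraMap K1 ℂ) hb
      push_cast at this ⊢
      simpa using this
    rw [hr] at this
    have : (r:ℂ)^2 = -1 := this
    have h2 : (r^2 : ℝ) = -1 := by exact_mod_cast this
    nlinarith [sq_nonneg r]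
  · simp [Complex.I_sq]

theorem hfinrank2 : Module.finrank K1 (IntermediateField.adjoin K1 {Complex.I}) = 2 := by
  have hint : IsIntegral K1 Complex.I := by
    refine ⟨X^2 - C (-1), monic_X_pow_sub_C _ (by norm_num), ?_⟩
    simp [Complex.I_sq]
  rw [IntermediateField.adjoin.finrank hint, hminI]
  rw [natDegree_X_pow_sub_C]

theorem hfinrank1 : Module.finrank ℚ K1 = 4 := by
  rw [show K1 = ℚ⟮a'⟯ from rfl, IntermediateField.adjoin.finrank hint_a, hminpoly_a,
    natDegree_X_pow_sub_C]

theorem hLrs : L = IntermediateField.restrictScalars ℚ (IntermediateField.adjoin K1 {Complex.I}) := by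
  show IntermediateField.adjoin ℚ _ = IntermediateField.restrictScalars ℚ
    (IntermediateField.adjoin (IntermediateField.adjoin ℚ {a'}) {Complex.I})
  refine Eq.trans ?_ (IntermediateField.adjoin_adjoin_left ℚ {a'} {Complex.I}).symm
  rfl

theorem hfinrankL : Module.finrank ℚ L = 8 := by
  have h := Module.finrank_mul_finrank ℚ K1 (IntermediateField.adjoin K1 {Complex.I})
  rw [hfinrank1, hfinrank2] at h
  rw [hLrs]
  exact h.symm

noncomputable def q : ℚ[X] := (X^4 - C 6) * (X^2 + C 1)

theorem hq_monic : q.Monic :=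
  (monic_X_pow_sub_C 6 (by norm_num)).mul (monic_X_pow_add_C 1 (by norm_num))

theorem hmemL_a : a' ∈ L := IntermediateField.subset_adjoin ℚ _ (Set.mem_insert _ _)
theorem hmemL_I : Complex.I ∈ L :=
  IntermediateField.subset_adjoin ℚ _ (Set.mem_insert_of_mem _ rfl)

theorem hLroot : L = IntermediateField.adjoin ℚ (q.rootSet ℂ) := by
  apply le_antisymm
  · rw [show L = IntermediateField.adjoin ℚ {a', Complex.I} from rfl,
      IntermediateField.adjoin_le_iff]
    rintro x (rfl | rfl)
    · apply IntermediateField.subset_adjoin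
      rw [mem_rootSet]
      refine ⟨hq_monic.ne_zero, ?_⟩
      simp [q, ha4]
    · apply IntermediateField.subset_adjoin
      rw [mem_rootSet]
      refine ⟨hq_monic.ne_zero, ?_⟩
      simp [q, Complex.I_sq]
  · rw [IntermediateField.adjoin_le_iff]
    intro x hx
    rw [mem_rootSet] at hx
    have hx' : (x^4 - 6) * (x^2 + 1) = 0 := by simpa [q] using hx.2
    rcases mul_eq_zero.mp hx' with h | h
    · have h4 : x ^ 4 = a' ^ 4 := by rw [ha4]; linear_combination h
      have hfac : (x - a') * (x + a') * (x - Complex.I * a') * (x + Complex.I * a') = 0 := by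
        linear_combination h4 + (a'^4 - a'^2 * x^2) * Complex.I_sq
      have hIa : Complex.I * a' ∈ L := L.mul_mem hmemL_I hmemL_a
      rcases mul_eq_zero.mp hfac with h' | h'
      · rcases mul_eq_zero.mp h' with h'' | h''
        · rcases mul_eq_zero.mp h'' with h3 | h3
          · rw [sub_eq_zero] at h3; rw [h3]; exact hmemL_a
          · have : x = -a' := by linear_combination h3
            rw [this]; exact L.neg_mem hmemL_a
        · rw [sub_eq_zero] at h''; rw [h'']; exact hIa
      · have : x = -(Complex.I * a') := by linear_combination h'
        rw [this]; exact L.neg_mem hIa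
    · have : (x - Complex.I) * (x + Complex.I) = 0 := by
        linear_combination h - Complex.I_sq
      rcases mul_eq_zero.mp this with h' | h'
      · rw [sub_eq_zero] at h'; rw [h']; exact hmemL_I
      · have : x = -Complex.I := by linear_combination h'
        rw [this]; exact L.neg_mem hmemL_I

theorem hq_sep : q.Separable := by
  apply Polynomial.Separable.mul
  · exact irrQ.separable
  · refine ⟨C 1, -(C (1/2) * X), ?_⟩
    rw [show derivative (X^2 + C 1 : ℚ[X]) = C 2 * X by
      simp [derivative_X_pow]
      rw [one_add_one_eq_two, C_ofNat]]
    have : (C (1/2) * C 2 : ℚ[X]) = C 1 := by rw [← map_mul]; norm_num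
    ring_nf
    ring_nf at this
    rw [show (X^2 * C (1/2) * C 2 : ℚ[X]) = X ^ 2 * (C (1/2) * C 2) by ring, this]
    simp
  · refine ⟨-(C (1/5)), C (1/5) * (X^2 - C 1), ?_⟩
    ring_nf
    simp only [← map_pow, ← map_mul, ← map_sub]
    norm_num

theorem hsfL : Polynomial.IsSplittingField ℚ L q := by
  rw [hLroot]
  exact IntermediateField.adjoin_rootSet_isSplittingField (IsAlgClosed.splits _)

instance hGalL : IsGalois ℚ L := by
  have := hsfL
  exact IsGalois.of_separable_splitting_field hq_sep

instance : FiniteDimensional ℚ L := by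
  have := hsfL
  exact Polynomial.IsSplittingField.finiteDimensional L q

theorem exists_sigma : ∃ σ : L ≃ₐ[ℚ] L, (σ ⟨a', hmemL_a⟩ : ℂ) = Complex.I * a' := by
  have hK : ∀ s ∈ ({a', Complex.I} : Set ℂ), IsIntegral ℚ s ∧
      ((minpoly ℚ s).map (algebraMap ℚ ℂ)).Splits := by
    rintro s (rfl | rfl)
    · exact ⟨hint_a, IsAlgClosed.splits _⟩
    · exact ⟨hint_I, IsAlgClosed.splits _⟩
  have hx : a' ∈ IntermediateField.adjoin ℚ ({a', Complex.I} : Set ℂ) :=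
    IntermediateField.subset_adjoin ℚ _ (Set.mem_insert _ _)
  have hy : aeval (Complex.I * a') (minpoly ℚ a') = 0 := by
    rw [hminpoly_a]
    simp only [map_sub, map_pow, aeval_X, aeval_C]
    rw [mul_pow, ha4]
    simp [show (Complex.I)^4 = 1 by
      rw [show (4:ℕ) = 2*2 from rfl, pow_mul, Complex.I_sq]; norm_num]
  obtain ⟨φ, hφ⟩ := IntermediateField.exists_algHom_adjoin_of_splits_of_aeval hK hx hy
  let φ' : L →ₐ[ℚ] ℂ := φ
  refine ⟨AlgHom.restrictNormal' φ' L, ?_⟩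
  have hcomm := AlgHom.restrictNormal_commutes φ' L ⟨a', hmemL_a⟩
  have h1 : (algebraMap (↥L) ℂ) ((φ'.restrictNormal L) ⟨a', hmemL_a⟩)
      = ((AlgHom.restrictNormal' φ' L) ⟨a', hmemL_a⟩ : ℂ) := rfl
  rw [h1] at hcomm
  rw [hcomm]
  have h3 : φ' ((algebraMap (↥L) ↥L) ⟨a', hmemL_a⟩) = φ ⟨a', hx⟩ := rfl
  rw [h3, hφ]

noncomputable def cc : L ≃ₐ[ℚ] L :=
  AlgEquiv.restrictNormal (Complex.conjAe.restrictScalars ℚ) L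

theorem hcc (x : L) : (cc x : ℂ) = (starRingEnd ℂ) (x : ℂ) := by
  have := AlgEquiv.restrictNormal_commutes (Complex.conjAe.restrictScalars ℚ) L x
  exact this

theorem noncomm : ∃ σ τ : L ≃ₐ[ℚ] L, σ * τ ≠ τ * σ := by
  obtain ⟨σ, hσ⟩ := exists_sigma
  refine ⟨σ, cc, fun h => ?_⟩
  have h1 : (σ * cc) ⟨a', hmemL_a⟩ = (cc * σ) ⟨a', hmemL_a⟩ := by rw [h]
  have hccfix : cc ⟨a', hmemL_a⟩ = ⟨a', hmemL_a⟩ := by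
    apply Subtype.ext
    rw [hcc]
    show (starRingEnd ℂ) a' = a'
    unfold a'
    exact Complex.conj_ofReal _
  have h2 : ((σ * cc) ⟨a', hmemL_a⟩ : ℂ) = Complex.I * a' := by
    rw [AlgEquiv.mul_apply, hccfix, hσ]
  have h3 : ((cc * σ) ⟨a', hmemL_a⟩ : ℂ) = -(Complex.I * a') := by
    rw [AlgEquiv.mul_apply, hcc]
    rw [show ((σ ⟨a', hmemL_a⟩ : L) : ℂ) = Complex.I * a' from hσ]
    rw [map_mul, Complex.conj_I]
    unfold a'
    rw [Complex.conj_ofReal]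
    ring
  rw [h1, h3] at h2
  apply ha_ne
  have h4 : (2 : ℂ) * (Complex.I * a') = 0 := by linear_combination -h2
  simp only [mul_eq_zero] at h4
  rcases h4 with h | h
  · norm_num at h
  · rcases h with h | h
    · exact absurd h Complex.I_ne_zero
    · exact h

theorem grp_thm (G : Type*) [Group G] (hG : Nat.card G = 8)
    (hnc : ∃ σ τ : G, σ * τ ≠ τ * σ) :
    IsCyclic (Subgroup.center G) ∧ Nat.card (Subgroup.center G) = 2 ∧
    (Subgroup.center G).index = 4 := by
  obtain ⟨σ, τ, hστ⟩ := hnc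
  have hfin : Finite G := Nat.finite_of_card_ne_zero (by omega)
  have hnt : Nontrivial G := ⟨σ * τ, τ * σ, hστ⟩
  have hp : IsPGroup 2 G := IsPGroup.of_card (hG.trans (by norm_num : (8:ℕ) = 2^3))
  have hcenter_nt : Nontrivial (Subgroup.center G) := hp.center_nontrivial
  have hZcard : 2 ≤ Nat.card (Subgroup.center G) := Finite.one_lt_card
  have hprod : Nat.card (Subgroup.center G) * (Subgroup.center G).index = 8 := by
    rw [Subgroup.card_mul_index, hG]
  have hne1 : (Subgroup.center G).index ≠ 1 := by
    intro h
    rw [Subgroup.index_eq_one] at h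
    have h1 : σ ∈ Subgroup.center G := h ▸ Subgroup.mem_top σ
    exact hστ (Subgroup.mem_center_iff.mp h1 τ).symm
  have hne2 : (Subgroup.center G).index ≠ 2 := by
    intro h
    have hq : Nat.card (G ⧸ Subgroup.center G) = 2 := h
    have : Fact (Nat.Prime 2) := ⟨Nat.prime_two⟩
    have hcyc : IsCyclic (G ⧸ Subgroup.center G) := isCyclic_of_prime_card hq
    have := commutative_of_cyclic_center_quotient (QuotientGroup.mk' (Subgroup.center G))
      (by rw [QuotientGroup.ker_mk']) σ τ
    exact hστ this
  have key : ∀ n k : ℕ, n * k = 8 → 2 ≤ n → k ≠ 1 → k ≠ 2 → k = 4 ∧ n = 2 := by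
    intro n k h hn h1 h2
    have hk : k ≤ 4 := by nlinarith
    interval_cases k <;> omega
  obtain ⟨hidx, hcard⟩ := key _ _ hprod hZcard hne1 hne2
  refine ⟨isCyclic_of_prime_card (p := 2) hcard, hcard, hidx⟩

/-- `L/ℚ` is Galois, and the center of `Gal(L/ℚ)` is cyclic of order `2` and
has index `4` in `Gal(L/ℚ)`; in particular `L` satisfies Cohen's condition. -/
theorem stmt_2 :
    IsGalois ℚ L ∧
    IsCyclic (Subgroup.center (L ≃ₐ[ℚ] L)) ∧
    Nat.card (Subgroup.center (L ≃ₐ[ℚ] L)) = 2 ∧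
    (Subgroup.center (L ≃ₐ[ℚ] L)).index = 4 := by
  have hcardG : Nat.card (L ≃ₐ[ℚ] L) = 8 := by
    rw [IsGalois.card_aut_eq_finrank, hfinrankL]
  obtain ⟨h1, h2, h3⟩ := grp_thm (L ≃ₐ[ℚ] L) hcardG noncomm
  exact ⟨hGalL, h1, h2, h3⟩
end

section
/- Let K = ℚ(√-6) with ring of integers 𝒪_K = ℤ[√-6]. For every nonzero ideal 𝔞 of 𝒪_K whose absolute norm N(𝔞) is coprime to 24, the residue of N(𝔞) modulo 24 lies in the set {1, 5, 7, 11}. -/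
set_option synthInstance.maxHeartbeats 1000000
set_option maxHeartbeats 1000000

open Polynomial IntermediateField NumberField

lemma sqmod24 {n : ℕ} (h : Nat.Coprime n 24) : n ^ 2 % 24 = 1 := by
  have h2 : n ^ 2 % 24 = (n % 24) ^ 2 % 24 := by rw [Nat.pow_mod]
  have hc : Nat.Coprime (n % 24) 24 := by
    unfold Nat.Coprime at h ⊢
    rw [← Nat.gcd_rec, Nat.gcd_comm]
    exact h
  obtain ⟨r, hrlt, hrval⟩ : ∃ r, r < 24 ∧ n % 24 = r :=
    ⟨n % 24, Nat.mod_lt _ (by norm_num), rfl⟩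
  rw [h2, hrval]
  rw [hrval] at hc
  interval_cases r <;> revert hc <;> decide

lemma exists_sqrt (K : Type) [Field K] [NumberField K]
    (h : IsSplittingField ℚ K (X ^ 2 + C 6)) :
    ∃ t : NumberField.RingOfIntegers K, t ^ 2 = -6 := by
  haveI := h
  have hdeg : (X ^ 2 + C (6:ℚ)).degree ≠ 0 := by
    rw [Polynomial.degree_X_pow_add_C (by norm_num)]; norm_num
  obtain ⟨θ, hθ⟩ := (Polynomial.Splits.exists_eval_eq_zero (h.splits) (by rwa [degree_map])).imp fun _ hx => (eval_map _ _).symm.trans hx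
  have hθK : θ ^ 2 = -6 := by
    simp only [eval₂_add, eval₂_pow, eval₂_X, eval₂_C] at hθ
    have h6 : (algebraMap ℚ K) 6 = 6 := by simp
    rw [h6] at hθ
    linear_combination hθ
  have hint : IsIntegral ℤ θ := by
    refine ⟨X ^ 2 + C 6, ?_, ?_⟩
    · apply Polynomial.monic_X_pow_add_C _ (by norm_num)
    · simp only [eval₂_add, eval₂_pow, eval₂_X, eval₂_C]
      rw [hθK]
      simp
  refine ⟨⟨θ, hint⟩, ?_⟩
  apply NumberField.RingOfIntegers.coe_injective
  push_cast
  show θ ^ 2 = _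
  rw [hθK]
  norm_cast

lemma hns3 : ¬ IsSquare (((2:ℕ):ℤ) : ZMod 3) := by decide

lemma sq_neg_six (p : ℕ) [hp : Fact p.Prime] (hp2 : p ≠ 2) (hp3 : p ≠ 3)
    (h : IsSquare (-6 : ZMod p)) : p % 24 = 1 ∨ p % 24 = 5 ∨ p % 24 = 7 ∨ p % 24 = 11 := by
  haveI : Fact (Nat.Prime 3) := ⟨by norm_num⟩
  have hpodd : p % 2 = 1 := Nat.Prime.eq_two_or_odd hp.out |>.resolve_left hp2
  have hp2' : ¬ p ∣ 2 := fun h' => hp2 ((Nat.prime_dvd_prime_iff_eq hp.out Nat.prime_two).mp h')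
  have hp3' : ¬ p ∣ 3 := fun h' => hp3 ((Nat.prime_dvd_prime_iff_eq hp.out Nat.prime_three).mp h')
  have h2ne : ((-2 : ℤ) : ZMod p) ≠ 0 := by
    rw [Ne, ZMod.intCast_zmod_eq_zero_iff_dvd]
    intro hd
    exact hp2' (by exact_mod_cast dvd_neg.mp hd)
  have h3ne : ((3 : ℤ) : ZMod p) ≠ 0 := by
    rw [Ne, ZMod.intCast_zmod_eq_zero_iff_dvd]
    intro hd
    exact hp3' (by exact_mod_cast hd)
  have h6ne : ((-6 : ℤ) : ZMod p) ≠ 0 := by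
    rw [Ne, ZMod.intCast_zmod_eq_zero_iff_dvd]
    intro hd
    have : (p:ℤ) ∣ 6 := dvd_neg.mp hd
    have h6 : p ∣ 6 := by exact_mod_cast this
    rcases (Nat.Prime.dvd_mul hp.out (m := 2) (n := 3)).mp (by norm_num at h6 ⊢; omega) with h' | h'
    · exact hp2' h'
    · exact hp3' h'
  have h1 : legendreSym p (-6) = 1 := (legendreSym.eq_one_iff p h6ne).mpr (by push_cast; exact h)
  have hmul : legendreSym p (-2) * legendreSym p 3 = 1 := by
    rw [← legendreSym.mul]; norm_num at h1 ⊢; exact h1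
  have ha : legendreSym p (-2) = 1 ∨ legendreSym p (-2) = -1 :=
    sq_eq_one_iff.mp (legendreSym.sq_one p h2ne)
  have hb : legendreSym p 3 = 1 ∨ legendreSym p 3 = -1 :=
    sq_eq_one_iff.mp (legendreSym.sq_one p h3ne)
  -- reciprocity for 3
  have hrec : legendreSym p 3 = (-1) ^ (p / 2) * legendreSym 3 (p : ℤ) := by
    have := legendreSym.quadratic_reciprocity' (p := 3) (q := p) (by norm_num) hp2
    norm_num at this
    exact this
  have hmod3 : legendreSym 3 (p : ℤ) = legendreSym 3 ((p % 3 : ℕ) : ℤ) := by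
    rw [legendreSym.mod]
    congr 1
  have hp3r : p % 3 = 1 ∨ p % 3 = 2 := by
    have : p % 3 ≠ 0 := fun h' => hp3 (((Nat.prime_dvd_prime_iff_eq Nat.prime_three hp.out).mp (Nat.dvd_of_mod_eq_zero h')).symm)
    omega
  have hp4r : p % 4 = 1 ∨ p % 4 = 3 := by omega
  have hbval : (legendreSym p 3 = 1 ∧ (p % 4 = 1 ∧ p % 3 = 1 ∨ p % 4 = 3 ∧ p % 3 = 2))
      ∨ (legendreSym p 3 = -1 ∧ (p % 4 = 1 ∧ p % 3 = 2 ∨ p % 4 = 3 ∧ p % 3 = 1)) := by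
    have e1 : legendreSym 3 ((1 : ℕ) : ℤ) = 1 := by
      norm_num [legendreSym.at_one]
    have e2 : legendreSym 3 ((2 : ℕ) : ℤ) = -1 :=
      (legendreSym.eq_neg_one_iff 3).mpr hns3
    rcases hp4r with h4 | h4 <;> rcases hp3r with h3 | h3 <;>
      rw [hmod3, h3] at hrec <;>
      [skip; skip; skip; skip]
    · left; rw [hrec, ZMod.neg_one_pow_div_two_of_one_mod_four h4, e1]; norm_num; tauto
    · right; rw [hrec, ZMod.neg_one_pow_div_two_of_one_mod_four h4, e2]; norm_num; tauto
    · right; rw [hrec, ZMod.neg_one_pow_div_two_of_three_mod_four h4, e1]; norm_num; tauto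
    · left; rw [hrec, ZMod.neg_one_pow_div_two_of_three_mod_four h4, e2]; norm_num; tauto
  have hsq2 : IsSquare (-2 : ZMod p) ↔ p % 8 = 1 ∨ p % 8 = 3 := ZMod.exists_sq_eq_neg_two_iff hp2
  rcases hbval with ⟨hb1, hcase⟩ | ⟨hb1, hcase⟩
  · -- b = 1 so a = 1, -2 is a square
    have ha1 : legendreSym p (-2) = 1 := by
      rcases ha with h' | h'
      · exact h'
      · rw [h', hb1] at hmul; norm_num at hmul
    have h8 : p % 8 = 1 ∨ p % 8 = 3 := by
      refine hsq2.mp ?_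
      have := (legendreSym.eq_one_iff p h2ne).mp ha1
      push_cast at this
      exact this
    omega
  · have ha1 : legendreSym p (-2) = -1 := by
      rcases ha with h' | h'
      · rw [h', hb1] at hmul; norm_num at hmul
      · exact h'
    have h8 : ¬ (p % 8 = 1 ∨ p % 8 = 3) := by
      rw [← hsq2]
      have := legendreSym.eq_neg_one_iff p (a := -2) |>.mp ha1
      push_cast at this
      exact this
    omega

lemma irr6 : Irreducible (X ^ 2 + C (6:ℚ)) := by
  have : (X ^ 2 + C (6:ℚ)) = X ^ 2 - C (-6 : ℚ) := by rw [map_neg, sub_neg_eq_add]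
  rw [this]
  exact X_pow_sub_C_irreducible_of_prime Nat.prime_two (fun b => by nlinarith [sq_nonneg b])

lemma rank2 (K : Type) [Field K] [NumberField K]
    (h : IsSplittingField ℚ K (X ^ 2 + C 6)) : Module.finrank ℚ K = 2 := by
  haveI := h
  have hdeg : (X ^ 2 + C (6:ℚ)).degree ≠ 0 := by
    rw [Polynomial.degree_X_pow_add_C (by norm_num)]; norm_num
  obtain ⟨θ, hθ⟩ := (Polynomial.Splits.exists_eval_eq_zero (h.splits) (by rwa [degree_map])).imp fun _ hx => (eval_map _ _).symm.trans hx
  have hθK : θ ^ 2 = -6 := by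
    simp only [eval₂_add, eval₂_pow, eval₂_X, eval₂_C] at hθ
    have h6 : (algebraMap ℚ K) 6 = 6 := by simp
    rw [h6] at hθ
    linear_combination hθ
  have hint : IsIntegral ℚ θ := by
    refine ⟨X ^ 2 + C 6, ?_, ?_⟩
    · apply Polynomial.monic_X_pow_add_C _ (by norm_num)
    · simp [hθK]
  have hsub : (X ^ 2 + C (6:ℚ)).rootSet K ⊆ (ℚ⟮θ⟯ : Set K) := by
    intro x hx
    rw [Polynomial.mem_rootSet] at hx
    have hx2 : x ^ 2 = -6 := by
      have := hx.2
      simp only [map_add, map_pow, aeval_X, aeval_C] at this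
      have h6 : (algebraMap ℚ K) 6 = 6 := by simp
      rw [h6] at this
      linear_combination this
    have : (x - θ) * (x + θ) = 0 := by ring_nf; rw [hx2, hθK]; ring
    rcases mul_eq_zero.mp this with h' | h'
    · have : x = θ := by linear_combination h'
      rw [this]; exact IntermediateField.mem_adjoin_simple_self ℚ θ
    · have : x = -θ := by linear_combination h'
      rw [this]
      exact neg_mem (IntermediateField.mem_adjoin_simple_self ℚ θ)
  have htop : ℚ⟮θ⟯ = ⊤ := by
    have hle : (⊤ : Subalgebra ℚ K) ≤ ℚ⟮θ⟯.toSubalgebra := by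
      rw [← IsSplittingField.adjoin_rootSet (L := K) (X ^ 2 + C (6:ℚ))]
      exact Algebra.adjoin_le hsub
    rw [eq_top_iff]
    intro x _
    exact hle (by trivial)
  have hmin : minpoly ℚ θ = X ^ 2 + C 6 :=
    (minpoly.eq_of_irreducible_of_monic irr6 (by simpa using hθ)
      (Polynomial.monic_X_pow_add_C _ (by norm_num))).symm
  have := IntermediateField.adjoin.finrank hint
  rw [htop, IntermediateField.finrank_top', hmin] at this
  rw [this]
  compute_degree!

lemma prime_norm (K : Type) [Field K] [NumberField K]
    (h : IsSplittingField ℚ K (X ^ 2 + C 6))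
    (P : Ideal (𝓞 K)) (hP : P.IsPrime) (hP0 : P ≠ ⊥)
    (hcop : Nat.Coprime (Ideal.absNorm P) 24) :
    Ideal.absNorm P % 24 = 1 ∨ Ideal.absNorm P % 24 = 5 ∨
      Ideal.absNorm P % 24 = 7 ∨ Ideal.absNorm P % 24 = 11 := by
  haveI : P.IsPrime := hP
  have hcard : Nat.card (𝓞 K ⧸ P) = Ideal.absNorm P :=
    ((Ideal.absNorm_apply P).trans (Submodule.cardQuot_apply _)).symm
  have hne0 : Ideal.absNorm P ≠ 0 := by
    intro h0
    rw [h0] at hcop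
    norm_num [Nat.Coprime] at hcop
  haveI : Finite (𝓞 K ⧸ P) := Nat.finite_of_card_ne_zero (by rw [hcard]; exact hne0)
  set p := ringChar (𝓞 K ⧸ P) with hpdef
  haveI : CharP (𝓞 K ⧸ P) p := ringChar.charP _
  have hpprime : p.Prime := CharP.char_is_prime (𝓞 K ⧸ P) p
  haveI : Fact p.Prime := ⟨hpprime⟩
  have hmem : ((p : ℕ) : 𝓞 K) ∈ P := by
    have : (Ideal.Quotient.mk P) ((p : ℕ) : 𝓞 K) = 0 := by
      rw [map_natCast]
      exact CharP.cast_eq_zero _ p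
    exact Ideal.Quotient.eq_zero_iff_mem.mp this
  have hdvd : Ideal.absNorm P ∣ p ^ 2 := by
    have h1 : P ∣ Ideal.span {((p : ℕ) : 𝓞 K)} :=
      Ideal.dvd_iff_le.mpr ((Ideal.span_singleton_le_iff_mem _).mpr hmem)
    have h2 := map_dvd Ideal.absNorm h1
    have hnormval : Algebra.norm ℤ (algebraMap ℤ (𝓞 K) (p : ℤ)) = (p : ℤ) ^ 2 := by
      rw [Algebra.norm_algebraMap_of_basis (RingOfIntegers.basis K),
        ← Module.finrank_eq_card_basis (RingOfIntegers.basis K),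
        RingOfIntegers.rank, rank2 K h]
    rwa [Ideal.absNorm_span_singleton,
      show ((p : ℕ) : 𝓞 K) = algebraMap ℤ (𝓞 K) (p : ℤ) by push_cast; rfl,
      hnormval,
      show (((p:ℤ)) ^ 2).natAbs = p ^ 2 by rw [Int.natAbs_pow]; rfl] at h2
  obtain ⟨i, hile, hnorm⟩ := (Nat.dvd_prime_pow hpprime).mp hdvd
  have hi0 : i ≠ 0 := by
    intro hi
    rw [hi, pow_zero] at hnorm
    exact hP.ne_top (Ideal.absNorm_eq_one_iff.mp hnorm)
  have hpc : Nat.Coprime p 24 :=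
    Nat.Coprime.coprime_dvd_left (hnorm ▸ dvd_pow_self p hi0) hcop
  have hp2 : p ≠ 2 := by intro hh; rw [hh] at hpc; norm_num [Nat.Coprime] at hpc
  have hp3 : p ≠ 3 := by intro hh; rw [hh] at hpc; norm_num [Nat.Coprime] at hpc
  interval_cases i
  · omega
  · -- i = 1 : residue degree 1
    rw [hnorm, pow_one]
    haveI : Fintype (𝓞 K ⧸ P) := Fintype.ofFinite _
    have hcards : Fintype.card (𝓞 K ⧸ P) = p := by
      rw [← Nat.card_eq_fintype_card, hcard, hnorm, pow_one]
    obtain ⟨t, ht⟩ := exists_sqrt K h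
    have hsqF : IsSquare (-6 : 𝓞 K ⧸ P) := by
      refine ⟨Ideal.Quotient.mk P t, ?_⟩
      rw [← map_mul, ← pow_two, ht]
      simp only [map_neg]
      rw [← map_ofNat (Ideal.Quotient.mk P) 6]
    have e := ZMod.ringEquiv (𝓞 K ⧸ P) hcards
    have hsqZ : IsSquare (-6 : ZMod p) := by
      have := hsqF.map e.symm.toRingHom
      simpa [map_ofNat] using this
    exact sq_neg_six p hp2 hp3 hsqZ
  · -- i = 2
    rw [hnorm]
    left
    exact sqmod24 hpc

/-- Let `K = ℚ(√-6)` (a splitting field of `X² + 6` over `ℚ`).  Every nonzero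
ideal of the ring of integers of `K` whose absolute norm is coprime to `24`
has norm congruent to `1`, `5`, `7`, or `11` modulo `24`. -/
theorem stmt_9 (K : Type) [Field K] [NumberField K]
    (h : IsSplittingField ℚ K (X ^ 2 + C 6))
    (𝔞 : Ideal (NumberField.RingOfIntegers K)) (h𝔞 : 𝔞 ≠ ⊥)
    (hcop : Nat.Coprime (Ideal.absNorm 𝔞) 24) :
    Ideal.absNorm 𝔞 % 24 ∈ ({1, 5, 7, 11} : Set ℕ) := by
  have key : ∀ a : Ideal (𝓞 K), a ≠ ⊥ → Nat.Coprime (Ideal.absNorm a) 24 →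
      (Ideal.absNorm a % 24 = 1 ∨ Ideal.absNorm a % 24 = 5 ∨
        Ideal.absNorm a % 24 = 7 ∨ Ideal.absNorm a % 24 = 11) := by
    intro a
    induction a using UniqueFactorizationMonoid.induction_on_prime with
    | h₁ =>
      intro hbot _
      exact absurd Ideal.zero_eq_bot hbot
    | h₂ x hx =>
      intro _ _
      rw [Ideal.isUnit_iff.mp hx, Ideal.absNorm_eq_one_iff.mpr rfl]
      left; rfl
    | h₃ a q ha hq ih =>
      intro _ hcop'
      rw [map_mul] at hcop' ⊢
      have hq' : Nat.Coprime (Ideal.absNorm q) 24 :=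
        Nat.Coprime.coprime_dvd_left (dvd_mul_right _ _) hcop'
      have ha' : Nat.Coprime (Ideal.absNorm a) 24 :=
        Nat.Coprime.coprime_dvd_left (dvd_mul_left _ _) hcop'
      have hqmem := prime_norm K h q (Ideal.isPrime_of_prime hq)
        (by rw [← Ideal.zero_eq_bot]; exact hq.ne_zero) hq'
      have hamem := ih (by rw [← Ideal.zero_eq_bot]; exact ha) ha'
      rw [Nat.mul_mod]
      rcases hqmem with hx | hx | hx | hx <;> rcases hamem with hy | hy | hy | hy <;>
        rw [hx, hy] <;> decide
  have := key 𝔞 h𝔞 hcop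
  simp only [Set.mem_insert_iff, Set.mem_singleton_iff]
  exact this
end
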